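/- Let 1 ≤ j ≤ k−1 be integers and V a finite set. Every edge-minimal traversable triple (J0,E1,E2) on V of size ℓ with 1 ≤ ℓ ≤ binom(|V|,j) satisfies |E1| ≤ ℓ−1 and |E2| ≤ ℓ−1. In particular, T_{ℓ,r,b} = ∅ unless 0 ≤ r, b ≤ ℓ−1. -/

import Mathlib

open Finset Filter

/-- A subfamily `Jstar ⊆ Jfam` of `j`-sets is `Jfam`-traversable in the `k`-graph `(V, E)`:
for any two distinct `A, B ∈ Jstar` there is a sequence of edges `e_0, …, e_m ∈ E` with
`A ⊆ e_0`, `B ⊆ e_m`, such that the intersection of any two consecutive edges contains some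
`j`-set belonging to `Jfam`.  (Singletons are trivially traversable.) -/
def TravIn {V : Type*} [DecidableEq V] (Jfam E Jstar : Finset (Finset V)) : Prop :=
  ∀ A ∈ Jstar, ∀ B ∈ Jstar, A ≠ B →
    ∃ (m : ℕ) (es : Fin (m + 1) → Finset V),
      (∀ i, es i ∈ E) ∧ A ⊆ es 0 ∧ B ⊆ es (Fin.last m) ∧
      ∀ i : Fin m, ∃ I ∈ Jfam, I ⊆ es i.castSucc ∧ I ⊆ es i.succ

/-- The family `Jfam` is traversable in `(V, E)` if it is `Jfam`-traversable. -/
def Trav {V : Type*} [DecidableEq V] (Jfam E : Finset (Finset V)) : Prop :=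
  TravIn Jfam E Jfam

/-- A triple `(J0, E1, E2)` is traversable if `J0` is traversable in both the red `k`-graph
`(V, E1)` and the blue `k`-graph `(V, E2)`. -/
def TravTriple {V : Type*} [DecidableEq V] (J0 E1 E2 : Finset (Finset V)) : Prop :=
  Trav J0 E1 ∧ Trav J0 E2

/-- A triple `(J0, E1, E2)` is an edge-minimal traversable triple if it is traversable and
removing any edge from `E1` or from `E2` destroys traversability. -/
def EdgeMinTravTriple {V : Type*} [DecidableEq V] (J0 E1 E2 : Finset (Finset V)) : Prop :=
  TravTriple J0 E1 E2 ∧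
  (∀ e ∈ E1, ¬ Trav J0 (E1.erase e)) ∧
  (∀ e ∈ E2, ¬ Trav J0 (E2.erase e))

/-!
Call two members of `J0` linked when some edge contains both; traversability of `J0` in `E` says
that this link graph on `J0` is connected. If deleting an edge `e` destroys traversability, then
`e` contains two members of `J0` that the remaining edges do not join. These pairs, one for each
edge, are distinct edges of a forest on `J0`, so there are at most `|J0| - 1` of them.
-/

namespace SimpleGraph

variable {α : Type*}

lemma Reachable.of_forall_adj_reachable {G H : SimpleGraph α}
    (hadj : ∀ ⦃u v⦄, H.Adj u v → G.Reachable u v) {u v : α} (h : H.Reachable u v) :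
    G.Reachable u v := by
  rw [reachable_iff_reflTransGen] at h
  induction h with
  | refl => rfl
  | tail _ huv ih => exact ih.trans (hadj huv)

lemma IsAcyclic.card_edgeSet_add_one_le [Finite α] [Nonempty α] {H : SimpleGraph α}
    (hH : H.IsAcyclic) : Nat.card H.edgeSet + 1 ≤ Nat.card α := by
  obtain ⟨T, hHT, -, hT⟩ := connected_top.exists_isTree_le_of_le_of_isAcyclic le_top hH
  rw [← (isTree_iff_connected_and_card.1 hT).2]
  gcongr
  exact Nat.card_mono (Set.toFinite _) (edgeSet_mono hHT)

/-- The pairs `s(u i, v i)` are distinct edges of a forest on `α`: each is a bridge, since `G i`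
joins the endpoints of every other pair but not its own. -/
theorem card_add_one_le_of_forall_not_reachable {ι : Type*} [Finite α] [Nonempty α]
    {G : ι → SimpleGraph α} {u v : ι → α} (hlink : ∀ i j, j ≠ i → (G i).Reachable (u j) (v j))
    (hsep : ∀ i, ¬ (G i).Reachable (u i) (v i)) : Nat.card ι + 1 ≤ Nat.card α := by
  let w : ι → Sym2 α := fun i => s(u i, v i)
  have hpair (i j : ι) (hji : j ≠ i) {a b : α} (hab : s(a, b) = w j) : (G i).Reachable a b := by
    rcases Sym2.eq_iff.1 hab with ⟨rfl, rfl⟩ | ⟨rfl, rfl⟩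
    exacts [hlink i j hji, (hlink i j hji).symm]
  have hinj : Function.Injective w := fun i j hij =>
    by_contra fun hne => hsep i (hpair i j (Ne.symm hne) hij)
  have hedges : (fromEdgeSet (Set.range w)).edgeSet = Set.range w := by
    rw [edgeSet_fromEdgeSet, sdiff_eq_left, Set.disjoint_left]
    rintro _ ⟨i, rfl⟩ hdiag
    exact hsep i (Sym2.mk_isDiag_iff.1 hdiag ▸ Reachable.rfl)
  have hacyc : (fromEdgeSet (Set.range w)).IsAcyclic := by
    rw [isAcyclic_iff_forall_isBridge, hedges]
    rintro _ ⟨i, rfl⟩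
    refine isBridge_iff.2 fun hr => hsep i (hr.of_forall_adj_reachable fun a b hab => ?_)
    rw [deleteEdges_adj, ← mem_edgeSet, hedges, Set.mem_singleton_iff] at hab
    obtain ⟨⟨j, hj⟩, hne⟩ := hab
    exact hpair i j (by rintro rfl; exact hne hj.symm) hj.symm
  simpa only [hedges, Nat.card_range_of_injective hinj] using hacyc.card_edgeSet_add_one_le

end SimpleGraph

open SimpleGraph

section LinkGraph

variable {V : Type*}

def linkGraph (J E : Finset (Finset V)) : SimpleGraph J where
  Adj A B := A ≠ B ∧ ∃ e ∈ E, A.1 ⊆ e ∧ B.1 ⊆ e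
  symm := ⟨fun _ _ ⟨hAB, e, he, hA, hB⟩ => ⟨hAB.symm, e, he, hB, hA⟩⟩
  loopless := ⟨fun _ h => h.1 rfl⟩

lemma linkGraph_adj {J E : Finset (Finset V)} {A B : J} :
    (linkGraph J E).Adj A B ↔ A ≠ B ∧ ∃ e ∈ E, A.1 ⊆ e ∧ B.1 ⊆ e := Iff.rfl

variable {J E : Finset (Finset V)}

lemma linkGraph_reachable_of_subset {e : Finset V} (he : e ∈ E) {A B : J}
    (hA : A.1 ⊆ e) (hB : B.1 ⊆ e) : (linkGraph J E).Reachable A B := by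
  by_cases hAB : A = B
  · exact hAB ▸ Reachable.rfl
  · exact Adj.reachable (linkGraph_adj.2 ⟨hAB, e, he, hA, hB⟩)

lemma linkGraph_reachable_of_chain {m : ℕ} {es : Fin (m + 1) → Finset V} (hes : ∀ i, es i ∈ E)
    (hchain : ∀ i : Fin m, ∃ I ∈ J, I ⊆ es i.castSucc ∧ I ⊆ es i.succ) {A : J}
    (hA : A.1 ⊆ es 0) (i : Fin (m + 1)) {C : J} (hC : C.1 ⊆ es i) :
    (linkGraph J E).Reachable A C := by
  induction i using Fin.induction generalizing C with
  | zero => exact linkGraph_reachable_of_subset (hes 0) hA hC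
  | succ i ih =>
    obtain ⟨I, hI, hIi, hIsucc⟩ := hchain i
    exact (ih (C := ⟨I, hI⟩) hIi).trans (linkGraph_reachable_of_subset (hes _) hIsucc hC)

lemma exists_chain_of_transGen_linkGraph {A B : J}
    (h : Relation.TransGen (linkGraph J E).Adj A B) :
    ∃ (m : ℕ) (es : Fin (m + 1) → Finset V),
      (∀ i, es i ∈ E) ∧ A.1 ⊆ es 0 ∧ B.1 ⊆ es (Fin.last m) ∧
      ∀ i : Fin m, ∃ I ∈ J, I ⊆ es i.castSucc ∧ I ⊆ es i.succ := by
  induction h with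
  | single hAB =>
    obtain ⟨-, e, he, hA, hB⟩ := linkGraph_adj.1 hAB
    exact ⟨0, fun _ => e, fun _ => he, hA, hB, Fin.elim0⟩
  | @tail C D _ hCD ih =>
    obtain ⟨m, es, hes, hA, hC, hchain⟩ := ih
    obtain ⟨-, f, hf, hCf, hD⟩ := linkGraph_adj.1 hCD
    set es' : Fin (m + 2) → Finset V := Fin.snoc es f
    have hcast (i : Fin (m + 1)) : es' i.castSucc = es i := Fin.snoc_castSucc ..
    have hlast : es' (Fin.last (m + 1)) = f := Fin.snoc_last ..
    have hmem : ∀ i, es' i ∈ E := by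
      refine Fin.lastCases ?_ fun i => ?_
      · exact hlast ▸ hf
      · exact hcast i ▸ hes i
    have hchain' : ∀ i : Fin (m + 1), ∃ I ∈ J, I ⊆ es' i.castSucc ∧ I ⊆ es' i.succ := by
      refine Fin.lastCases ?_ fun i => ?_
      · rw [hcast, Fin.succ_last, hlast]
        exact ⟨C, C.2, hC, hCf⟩
      · rw [hcast, Fin.succ_castSucc, hcast]
        exact hchain i
    refine ⟨m + 1, es', hmem, ?_, hlast ▸ hD, hchain'⟩
    rwa [← Fin.castSucc_zero, hcast]

theorem trav_iff_preconnected_linkGraph [DecidableEq V] :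
    Trav J E ↔ (linkGraph J E).Preconnected := by
  constructor
  · intro h A B
    by_cases hAB : A = B
    · exact hAB ▸ Reachable.rfl
    obtain ⟨m, es, hes, hA, hB, hchain⟩ := h A A.2 B B.2 (Subtype.coe_ne_coe.2 hAB)
    exact linkGraph_reachable_of_chain hes hchain hA _ hB
  · intro h A hA B hB hAB
    have hreach := h ⟨A, hA⟩ ⟨B, hB⟩
    rw [reachable_iff_reflTransGen, Relation.reflTransGen_iff_eq_or_transGen] at hreach
    obtain hBA | hAB' := hreach
    · exact absurd (congrArg Subtype.val hBA).symm hAB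
    · exact exists_chain_of_transGen_linkGraph hAB'

lemma exists_not_reachable_of_not_preconnected_erase [DecidableEq V] {e : Finset V}
    (hE : (linkGraph J E).Preconnected) (he : ¬ (linkGraph J (E.erase e)).Preconnected) :
    ∃ A B : J, A.1 ⊆ e ∧ B.1 ⊆ e ∧ ¬ (linkGraph J (E.erase e)).Reachable A B := by
  by_contra! h
  refine he fun A B => (hE A B).of_forall_adj_reachable fun C D hCD => ?_
  obtain ⟨-, f, hf, hC, hD⟩ := linkGraph_adj.1 hCD
  by_cases hfe : f = e
  · exact h C D (hfe ▸ hC) (hfe ▸ hD)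
  · exact linkGraph_reachable_of_subset (Finset.mem_erase.2 ⟨hfe, hf⟩) hC hD

theorem card_add_one_le_of_forall_not_preconnected_erase [DecidableEq V] (hJ : J.Nonempty)
    (hE : (linkGraph J E).Preconnected)
    (hmin : ∀ e ∈ E, ¬ (linkGraph J (E.erase e)).Preconnected) :
    E.card + 1 ≤ J.card := by
  have := hJ.to_subtype
  choose A B hA hB hAB using
    fun e : E => exists_not_reachable_of_not_preconnected_erase hE (hmin e e.2)
  have hlink (e e' : E) (hne : e' ≠ e) : (linkGraph J (E.erase e)).Reachable (A e') (B e') :=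
    linkGraph_reachable_of_subset (Finset.mem_erase.2 ⟨Subtype.coe_ne_coe.2 hne, e'.2⟩)
      (hA e') (hB e')
  simpa only [Nat.card_eq_finsetCard] using card_add_one_le_of_forall_not_reachable hlink hAB

end LinkGraph

theorem edgeMin_triple_card_le_general (V : Type*) [DecidableEq V] (J0 E1 E2 : Finset (Finset V))
    (hmin : EdgeMinTravTriple J0 E1 E2)
    (ℓ : ℕ) (hcard : J0.card = ℓ)
    (hℓ1 : 1 ≤ ℓ) :
    E1.card ≤ ℓ - 1 ∧ E2.card ≤ ℓ - 1 := by
  obtain ⟨⟨hT1, hT2⟩, hmin1, hmin2⟩ := hmin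
  have hJ0 : J0.Nonempty := Finset.card_pos.1 (hcard ▸ hℓ1)
  simp only [trav_iff_preconnected_linkGraph] at hT1 hT2 hmin1 hmin2
  have h1 := card_add_one_le_of_forall_not_preconnected_erase hJ0 hT1 hmin1
  have h2 := card_add_one_le_of_forall_not_preconnected_erase hJ0 hT2 hmin2
  omega

/-- **Claim.** Every edge-minimal traversable triple `(J0, E1, E2)` of size
`1 ≤ ℓ ≤ binom(|V|,j)` contains at most `ℓ − 1` edges of each colour; in particular,
`T_{ℓ,r,b} = ∅` unless `0 ≤ r, b ≤ ℓ − 1`. -/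
theorem edgeMin_triple_card_le (k j : ℕ) (hj : 1 ≤ j) (hjk : j ≤ k - 1)
    (V : Type*) [DecidableEq V] [Fintype V]
    (J0 E1 E2 : Finset (Finset V))
    (hJ0 : J0 ⊆ (Finset.univ : Finset V).powersetCard j)
    (hE1 : E1 ⊆ (Finset.univ : Finset V).powersetCard k)
    (hE2 : E2 ⊆ (Finset.univ : Finset V).powersetCard k)
    (hmin : EdgeMinTravTriple J0 E1 E2)
    (ℓ : ℕ) (hcard : J0.card = ℓ)
    (hℓ1 : 1 ≤ ℓ) (hℓ2 : ℓ ≤ (Fintype.card V).choose j) :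
    E1.card ≤ ℓ - 1 ∧ E2.card ≤ ℓ - 1 :=
  edgeMin_triple_card_le_general V J0 E1 E2 hmin ℓ hcard hℓ1
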